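/- If a 2-connected graph contains a cycle on k vertices, then between any pair of distinct vertices of the graph there is a path of length at least ⌈k/2⌉. -/

import Mathlib

/-!
By 2-connectivity, two distinct vertices `s` and `t` can be joined to the cycle `C` by disjoint
paths meeting `C` only at their endpoints `a ≠ b`. Going from `s` to `a`, then along the longer of
the two arcs of `C` between `a` and `b` (at least `⌈k/2⌉` edges), then from `b` to `t` gives the
path. The two disjoint paths come from a fan from `s` to `C` (two paths into `C` meeting only at
`s`), built by induction on the distance from `s` to `C`, together with a path from `t` that
avoids `s` and is rerouted along one branch of the fan where it first meets it.
-/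

def TwoConnected {V : Type*} [Fintype V] (G : SimpleGraph V) : Prop :=
  G.Connected ∧ 3 ≤ Fintype.card V ∧ ∀ v : V, (G.induce ({v}ᶜ : Set V)).Connected

namespace SimpleGraph

variable {V : Type*} {G : SimpleGraph V}

namespace Walk

structure IsPathInto (S : Set V) {u v : V} (p : G.Walk u v) : Prop where
  isPath : p.IsPath
  end_mem : v ∈ S
  eq_end_of_mem : ∀ x ∈ p.support, x ∈ S → x = v

theorem IsPath.append {u v w : V} {p : G.Walk u v} {q : G.Walk v w} (hp : p.IsPath)
    (hq : q.IsPath) (h : ∀ x ∈ p.support, x ∈ q.support → x = v) : (p.append q).IsPath := by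
  rw [isPath_def, support_append, List.nodup_append]
  have hq' := hq.support_nodup
  rw [← q.cons_tail_support, List.nodup_cons] at hq'
  refine ⟨hp.support_nodup, hq'.2, fun x hx y hy hxy => ?_⟩
  subst hxy
  exact hq'.1 (h x hx (List.mem_of_mem_tail hy) ▸ hy)

theorem IsPathInto.isPath_append_append_reverse {S : Set V} {s a b t : V} {P : G.Walk s a}
    {W : G.Walk a b} {Q : G.Walk t b} (hP : P.IsPathInto S) (hQ : Q.IsPathInto S)
    (hPQ : ∀ x ∈ P.support, x ∉ Q.support) (hW : W.IsPath) (hWS : ∀ x ∈ W.support, x ∈ S) :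
    ((P.append W).append Q.reverse).IsPath := by
  refine (hP.isPath.append hW fun x hx hx' => hP.eq_end_of_mem x hx (hWS x hx')).append
    hQ.isPath.reverse fun x hx hx' => ?_
  rw [support_reverse, List.mem_reverse] at hx'
  rcases (mem_support_append_iff _ _).mp hx with hx | hx
  · exact absurd hx' (hPQ x hx)
  · exact hQ.eq_end_of_mem x hx' (hWS x hx)

variable [DecidableEq V]

theorem exists_isPathInto_support_subset {S : Set V} {u v : V} (p : G.Walk u v) (hv : v ∈ S) :
    ∃ (w : V) (q : G.Walk u w), q.IsPathInto S ∧ q.support ⊆ p.support := by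
  induction p with
  | nil => exact ⟨_, nil, ⟨.nil, hv, by simp⟩, by simp⟩
  | @cons u _ _ h p ih =>
    by_cases hu : u ∈ S
    · exact ⟨u, nil, ⟨.nil, hu, by simp⟩, by simp⟩
    obtain ⟨w, q, hq, hqp⟩ := ih hv
    refine ⟨w, (cons h q).bypass, ⟨bypass_isPath _, hq.end_mem, fun x hx hxS => ?_⟩, ?_⟩
    · rcases List.mem_cons.mp (support_bypass_subset_support _ hx) with rfl | hx
      · exact absurd hxS hu
      · exact hq.eq_end_of_mem x hx hxS
    · exact List.Subset.trans (support_bypass_subset_support _)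
        (by simpa using List.cons_subset_cons u hqp)

theorem IsPath.eq_of_mem_takeUntil_of_mem_dropUntil {u v w x : V} {p : G.Walk u v}
    (hp : p.IsPath) (hw : w ∈ p.support) (hx : x ∈ (p.takeUntil w hw).support)
    (hx' : x ∈ (p.dropUntil w hw).support) : x = w := by
  by_contra hxw
  exact (p.take_spec hw ▸ hp).ne_of_mem_support_of_append hxw hx hx' rfl

theorem IsCycle.exists_isPath_half_length_le {v a b : V} {c : G.Walk v v} (hc : c.IsCycle)
    (ha : a ∈ c.support) (hb : b ∈ c.support) (hab : a ≠ b) :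
    ∃ W : G.Walk a b, W.IsPath ∧ (∀ x ∈ W.support, x ∈ c.support) ∧
      (c.length + 1) / 2 ≤ W.length := by
  suffices ∀ c : G.Walk a a, c.IsCycle → b ∈ c.support →
      ∃ W : G.Walk a b, W.IsPath ∧ (∀ x ∈ W.support, x ∈ c.support) ∧
        (c.length + 1) / 2 ≤ W.length by
    simpa [mem_support_rotate_iff] using this (c.rotate a ha) (hc.rotate ha)
      ((c.mem_support_rotate_iff a ha).mpr hb)
  intro c hc hb
  have hsplit := c.take_spec hb
  have hlen : (c.takeUntil b hb).length + (c.dropUntil b hb).length = c.length := by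
    rw [← length_append, hsplit]
  rcases le_or_gt ((c.length + 1) / 2) (c.takeUntil b hb).length with h | h
  · exact ⟨_, hc.isPath_takeUntil hb, fun x hx => c.support_takeUntil_subset_support hb hx, h⟩
  · have hdrop : (c.dropUntil b hb).IsPath :=
      IsCycle.isPath_of_append_right (not_nil_of_ne hab) (hsplit.symm ▸ hc)
    refine ⟨_, hdrop.reverse, fun x hx => ?_, by rw [length_reverse]; omega⟩
    exact c.support_dropUntil_subset_support hb (by simpa using hx)

theorem isPathInto_append_dropUntil {S : Set V} {w a₁ a₂ t z : V} {A₁ : G.Walk w a₁}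
    {A₂ : G.Walk w a₂} {B : G.Walk t z} (hA₁ : A₁.IsPathInto S)
    (hA : ∀ x ∈ A₁.support, x ∈ A₂.support → x = w) (hB : B.IsPath)
    (hBS : ∀ x ∈ B.support, x ∈ S → x = z) (hBA₁ : ∀ x ∈ B.support, x ∈ A₁.support → x = z)
    (hBA₂ : ∀ x ∈ B.support, x ∈ A₂.support → x = z) (hz : z ∈ A₁.support) (hzw : z ≠ w) :
    (B.append (A₁.dropUntil z hz)).IsPathInto S ∧
      ∀ x ∈ (B.append (A₁.dropUntil z hz)).support, x ∉ A₂.support := by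
  have hdrop := A₁.support_dropUntil_subset_support hz
  have hw : w ∉ (A₁.dropUntil z hz).support := fun hw =>
    hzw (hA₁.isPath.eq_of_mem_takeUntil_of_mem_dropUntil hz (start_mem_support _) hw).symm
  refine ⟨⟨hB.append (hA₁.isPath.dropUntil hz) fun x hx hx' => hBA₁ x hx (hdrop hx'),
    hA₁.end_mem, fun x hx hxS => ?_⟩, fun x hx hx₂ => ?_⟩
  · rcases (mem_support_append_iff _ _).mp hx with hx | hx
    · obtain rfl := hBS x hx hxS
      exact hA₁.eq_end_of_mem x hz hxS
    · exact hA₁.eq_end_of_mem x (hdrop hx) hxS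
  · rcases (mem_support_append_iff _ _).mp hx with hx | hx
    · obtain rfl := hBA₂ x hx hx₂
      exact hzw (hA x hz hx₂)
    · exact hw (hA x (hdrop hx) hx₂ ▸ hx)

end Walk

open Walk

variable [Fintype V]

theorem _root_.TwoConnected.exists_walk_avoiding (h2 : TwoConnected G) {x u v : V} (hu : u ≠ x)
    (hv : v ≠ x) : ∃ p : G.Walk u v, x ∉ p.support := by
  obtain ⟨q⟩ := h2.2.2 x ⟨u, hu⟩ ⟨v, hv⟩
  refine ⟨q.map (Embedding.induce _).toHom, fun hx => ?_⟩
  obtain ⟨⟨y, hy⟩, -, hyx⟩ := List.mem_map.mp ((Walk.support_map _ _) ▸ hx)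
  exact hy hyx

variable [DecidableEq V]

theorem _root_.TwoConnected.exists_isPathInto_avoiding (h2 : TwoConnected G) {S : Set V}
    {x u v : V} (hv : v ∈ S) (hu : u ≠ x) (hvx : v ≠ x) :
    ∃ (w : V) (q : G.Walk u w), q.IsPathInto S ∧ x ∉ q.support := by
  obtain ⟨p, hxp⟩ := h2.exists_walk_avoiding hu hvx
  obtain ⟨w, q, hq, hqp⟩ := p.exists_isPathInto_support_subset hv
  exact ⟨w, q, hq, fun hx => hxp (hqp hx)⟩

theorem _root_.TwoConnected.exists_isPathInto_disjoint_of_fan (h2 : TwoConnected G)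
    {S : Set V} {w a₁ a₂ : V} {A₁ : G.Walk w a₁} {A₂ : G.Walk w a₂} (hA₁ : A₁.IsPathInto S)
    (hA₂ : A₂.IsPathInto S)
    (hA : ∀ x ∈ A₁.support, x ∈ A₂.support → x = w) (hw : w ∉ S) {t : V} (htw : t ≠ w) :
    ∃ (b a : V) (Q : G.Walk t b) (A : G.Walk w a), Q.IsPathInto S ∧ A.IsPathInto S ∧
      ∀ x ∈ Q.support, x ∉ A.support := by
  obtain ⟨z, B, hB, hwB⟩ := h2.exists_isPathInto_avoiding
    (S := {x | x ∈ S ∨ x ∈ A₁.support ∨ x ∈ A₂.support}) (.inr (.inl A₁.end_mem_support)) htw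
    fun h => hw (h ▸ hA₁.end_mem)
  have hzw : z ≠ w := fun h => hwB (h ▸ B.end_mem_support)
  have hBS : ∀ x ∈ B.support, x ∈ S → x = z := fun x hx h => hB.eq_end_of_mem x hx (.inl h)
  have hBA₁ : ∀ x ∈ B.support, x ∈ A₁.support → x = z := fun x hx h =>
    hB.eq_end_of_mem x hx (.inr (.inl h))
  have hBA₂ : ∀ x ∈ B.support, x ∈ A₂.support → x = z := fun x hx h =>
    hB.eq_end_of_mem x hx (.inr (.inr h))
  by_cases hz₁ : z ∈ A₁.support
  · obtain ⟨hQ, hQA⟩ := isPathInto_append_dropUntil hA₁ hA hB.isPath hBS hBA₁ hBA₂ hz₁ hzw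
    exact ⟨_, _, _, A₂, hQ, hA₂, hQA⟩
  by_cases hz₂ : z ∈ A₂.support
  · obtain ⟨hQ, hQA⟩ := isPathInto_append_dropUntil hA₂ (fun x h₂ h₁ => hA x h₁ h₂) hB.isPath
      hBS hBA₂ hBA₁ hz₂ hzw
    exact ⟨_, _, _, A₁, hQ, hA₁, hQA⟩
  have hzS : z ∈ S := hB.end_mem.resolve_right (not_or_intro hz₁ hz₂)
  exact ⟨z, a₁, B, A₁, ⟨hB.isPath, hzS, hBS⟩, hA₁, fun x hx hx₁ => hz₁ (hBA₁ x hx hx₁ ▸ hx₁)⟩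

theorem _root_.TwoConnected.exists_fan (h2 : TwoConnected G) {S : Set V} (hS : S.Nontrivial)
    {s : V} (hs : s ∉ S) :
    ∃ (a₁ a₂ : V) (A₁ : G.Walk s a₁) (A₂ : G.Walk s a₂), A₁.IsPathInto S ∧ A₂.IsPathInto S ∧
      ∀ x ∈ A₁.support, x ∈ A₂.support → x = s := by
  obtain ⟨a, ha⟩ := hS.nonempty
  obtain ⟨p⟩ := h2.1.preconnected s a
  induction p with
  | nil => exact absurd ha hs
  | @cons s w _ h p ih =>
    by_cases hw : w ∈ S
    · obtain ⟨b, hb, hbw⟩ := hS.exists_ne w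
      obtain ⟨z, R, hR, hwR⟩ := h2.exists_isPathInto_avoiding hb h.ne hbw
      refine ⟨w, z, cons h nil, R, ⟨by simp [h.ne], hw, fun x hx hxS => ?_⟩, hR,
        fun x hx hxR => ?_⟩
      · rcases List.mem_cons.mp hx with rfl | hx
        · exact absurd hxS hs
        · simpa using hx
      · rcases List.mem_cons.mp hx with rfl | hx
        · rfl
        · obtain rfl : x = w := by simpa using hx
          exact absurd hxR hwR
    obtain ⟨a₁, a₂, A₁, A₂, hA₁, hA₂, hA⟩ := ih hw ha
    obtain ⟨b, a, Q, A, hQ, hA', hQA⟩ := h2.exists_isPathInto_disjoint_of_fan hA₁ hA₂ hA hw h.ne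
    refine ⟨b, a, Q, cons h A, hQ, ⟨?_, hA'.end_mem, fun x hx hxS => ?_⟩, fun x hx hx' => ?_⟩
    · exact (cons_isPath_iff h A).mpr ⟨hA'.isPath, hQA s Q.start_mem_support⟩
    · rcases List.mem_cons.mp hx with rfl | hx
      · exact absurd hxS hs
      · exact hA'.eq_end_of_mem x hx hxS
    · rcases List.mem_cons.mp hx' with rfl | hx'
      · rfl
      · exact absurd hx' (hQA x hx)

theorem _root_.TwoConnected.exists_disjoint_isPathInto (h2 : TwoConnected G) {S : Set V}
    (hS : S.Nontrivial) {s t : V} (hst : s ≠ t) :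
    ∃ (a b : V) (P : G.Walk s a) (Q : G.Walk t b), P.IsPathInto S ∧ Q.IsPathInto S ∧
      ∀ x ∈ P.support, x ∉ Q.support := by
  have of_not_mem : ∀ {s t : V}, s ∉ S → t ≠ s → ∃ (b a : V) (Q : G.Walk t b) (A : G.Walk s a),
      Q.IsPathInto S ∧ A.IsPathInto S ∧ ∀ x ∈ Q.support, x ∉ A.support := fun hs hts => by
    obtain ⟨a₁, a₂, A₁, A₂, hA₁, hA₂, hA⟩ := h2.exists_fan hS hs
    exact h2.exists_isPathInto_disjoint_of_fan hA₁ hA₂ hA hs hts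
  by_cases hs : s ∈ S
  · by_cases ht : t ∈ S
    · exact ⟨s, t, nil, nil, ⟨.nil, hs, by simp⟩, ⟨.nil, ht, by simp⟩, by simpa using hst⟩
    · exact of_not_mem ht hst
  · obtain ⟨b, a, Q, A, hQ, hA, hQA⟩ := of_not_mem hs hst.symm
    exact ⟨a, b, A, Q, hA, hQ, fun x hxA hxQ => hQA x hxQ hxA⟩

end SimpleGraph

/-- If a 2-connected graph contains a cycle on `k` vertices, then between any pair of
distinct vertices there is a path of length at least `⌈k/2⌉`. -/
theorem stmt_6 {V : Type*} [Fintype V] (G : SimpleGraph V) (h2 : TwoConnected G)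
    (k : ℕ) (hcyc : ∃ (v : V) (c : G.Walk v v), c.IsCycle ∧ c.length = k) :
    ∀ s t : V, s ≠ t → ∃ p : G.Walk s t, p.IsPath ∧ (k + 1) / 2 ≤ p.length := by
  classical
  obtain ⟨v, c, hc, rfl⟩ := hcyc
  intro s t hst
  have hS : {x | x ∈ c.support}.Nontrivial :=
    ⟨v, c.start_mem_support, c.snd, c.getVert_mem_support 1, (c.adj_snd hc.not_nil).ne⟩
  obtain ⟨a, b, P, Q, hP, hQ, hPQ⟩ := h2.exists_disjoint_isPathInto hS hst
  have hab : a ≠ b := fun h => hPQ a P.end_mem_support (h ▸ Q.end_mem_support)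
  obtain ⟨W, hW, hWc, hWlen⟩ := hc.exists_isPath_half_length_le hP.end_mem hQ.end_mem hab
  refine ⟨_, hP.isPath_append_append_reverse hQ hPQ hW hWc, ?_⟩
  simp only [SimpleGraph.Walk.length_append, SimpleGraph.Walk.length_reverse]
  omega
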